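/- arXiv:2012.06443 — 4 statements merged into one kernel-verified Lean document; each statement's English description precedes it below -/
import Mathlib

section
/- Let α ≥ 3/2. There exists a constant C > 0, depending only on α, such that for all real T ≥ 1 and all t > 0, one has (t+T)^{3/2} ∫₀^t (1+t−s)^{−3/2} (s+T)^{−α} ds ≤ C T^{3/2−α}. -/
/-!
Since `s + T ≥ T`, one has `(s + T)^(-α) ≤ T^(3/2 - α) (s + T)^(-3/2)`, which reduces the estimate
to `α = 3/2`; the argument then works for any kernel exponent `p > 1` in place of `3/2`.
The bases `a = 1 + t - s` and `b = s + T` add up to `1 + t + T`, so the larger one is at least half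
of it and `a^(-p) b^(-p) ≤ ((1 + t + T)/2)^(-p) (a^(-p) + b^(-p))`. As `a, b ≥ 1`, each of
`∫ a^(-p)` and `∫ b^(-p)` is at most `1/(p - 1)`, and `(t + T)^p ((1 + t + T)/2)^(-p) ≤ 2^p`.
-/

open MeasureTheory Set

lemma rpow_neg_mul_rpow_neg_le {a b p : ℝ} (ha : 0 < a) (hb : 0 < b) (hp : 0 ≤ p) :
    a ^ (-p) * b ^ (-p) ≤ ((a + b) / 2) ^ (-p) * (a ^ (-p) + b ^ (-p)) := by
  have hm : 0 < (a + b) / 2 := by positivity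
  have ha' := Real.rpow_nonneg ha.le (-p)
  have hb' := Real.rpow_nonneg hb.le (-p)
  rcases le_total a b with hab | hab
  · have : b ^ (-p) ≤ ((a + b) / 2) ^ (-p) :=
      Real.rpow_le_rpow_of_nonpos hm (by linarith) (by linarith)
    nlinarith [Real.rpow_nonneg hm.le (-p)]
  · have : a ^ (-p) ≤ ((a + b) / 2) ^ (-p) :=
      Real.rpow_le_rpow_of_nonpos hm (by linarith) (by linarith)
    nlinarith [Real.rpow_nonneg hm.le (-p)]

lemma rpow_neg_le_rpow_mul_rpow_neg {T x p α : ℝ} (hT : 0 < T) (hTx : T ≤ x) (hpα : p ≤ α) :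
    x ^ (-α) ≤ T ^ (p - α) * x ^ (-p) := by
  have hx := hT.trans_le hTx
  calc x ^ (-α) = x ^ (p - α) * x ^ (-p) := by rw [← Real.rpow_add hx]; ring_nf
    _ ≤ T ^ (p - α) * x ^ (-p) := by
      gcongr ?_ * _
      exact Real.rpow_le_rpow_of_nonpos hT hTx (by linarith)

lemma rpow_mul_half_rpow_neg_le {x y p : ℝ} (hx : 0 < x) (hxy : x ≤ y) (hp : 0 ≤ p) :
    x ^ p * (y / 2) ^ (-p) ≤ 2 ^ p :=
  calc x ^ p * (y / 2) ^ (-p) ≤ x ^ p * (x / 2) ^ (-p) :=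
        mul_le_mul_of_nonneg_left
          (Real.rpow_le_rpow_of_nonpos (half_pos hx) (by linarith) (by linarith)) (by positivity)
    _ = 2 ^ p := by
        rw [Real.rpow_neg (by positivity), Real.div_rpow hx.le zero_le_two]
        field_simp

lemma integral_rpow_neg_le {p x y : ℝ} (hp : 1 < p) (hx : 0 < x) (hxy : x ≤ y) :
    ∫ u in x..y, u ^ (-p) ≤ x ^ (1 - p) / (p - 1) := by
  have h0 : (0 : ℝ) ∉ uIcc x y := by
    rw [uIcc_of_le hxy]; exact fun h => hx.not_ge h.1
  rw [integral_rpow (Or.inr ⟨by linarith, h0⟩), show -p + 1 = -(p - 1) by ring,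
    div_neg, ← neg_div, neg_sub, neg_sub]
  gcongr
  linarith [Real.rpow_nonneg (hx.trans_le hxy).le (1 - p)]

lemma integral_rpow_neg_le_of_one_le {p x y : ℝ} (hp : 1 < p) (hx : 1 ≤ x) (hxy : x ≤ y) :
    ∫ u in x..y, u ^ (-p) ≤ 1 / (p - 1) :=
  (integral_rpow_neg_le hp (by linarith) hxy).trans <| by
    gcongr
    exact Real.rpow_le_one_of_one_le_of_nonpos hx (by linarith)

lemma continuousOn_one_add_sub_rpow {t : ℝ} (ht : 0 ≤ t) (q : ℝ) :
    ContinuousOn (fun s => (1 + t - s) ^ q) (uIcc 0 t) :=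
  (continuous_const.sub continuous_id).continuousOn.rpow_const fun s hs => by
    rw [uIcc_of_le ht] at hs
    exact Or.inl (show 0 < 1 + t - s by linarith [hs.2]).ne'

lemma continuousOn_add_rpow {t T : ℝ} (ht : 0 ≤ t) (hT : 0 < T) (q : ℝ) :
    ContinuousOn (fun s => (s + T) ^ q) (uIcc 0 t) :=
  (continuous_id.add continuous_const).continuousOn.rpow_const fun s hs => by
    rw [uIcc_of_le ht] at hs
    exact Or.inl (show 0 < s + T by linarith [hs.1]).ne'

lemma integral_rpow_neg_conv_le {p t T : ℝ} (hp : 1 < p) (ht : 0 ≤ t) (hT : 1 ≤ T) :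
    ∫ s in (0 : ℝ)..t, (1 + t - s) ^ (-p) * (s + T) ^ (-p) ≤
      ((1 + t + T) / 2) ^ (-p) * (2 / (p - 1)) := by
  have hpt : ∀ s ∈ Icc 0 t, (1 + t - s) ^ (-p) * (s + T) ^ (-p) ≤
      ((1 + t + T) / 2) ^ (-p) * ((1 + t - s) ^ (-p) + (s + T) ^ (-p)) := by
    intro s hs
    have h := rpow_neg_mul_rpow_neg_le (a := 1 + t - s) (b := s + T) (p := p)
      (by linarith [hs.2]) (by linarith [hs.1]) (by linarith)
    rwa [show 1 + t - s + (s + T) = 1 + t + T by ring] at h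
  have hleft : ∫ s in (0 : ℝ)..t, (1 + t - s) ^ (-p) ≤ 1 / (p - 1) := by
    rw [intervalIntegral.integral_comp_sub_left (· ^ (-p)), add_sub_cancel_right, sub_zero]
    exact integral_rpow_neg_le_of_one_le hp le_rfl (by linarith)
  have hright : ∫ s in (0 : ℝ)..t, (s + T) ^ (-p) ≤ 1 / (p - 1) := by
    rw [intervalIntegral.integral_comp_add_right (· ^ (-p)), zero_add]
    exact integral_rpow_neg_le_of_one_le hp hT (by linarith)
  have hA := continuousOn_one_add_sub_rpow ht (-p)
  have hB := continuousOn_add_rpow (T := T) ht (by linarith) (-p)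
  calc ∫ s in (0 : ℝ)..t, (1 + t - s) ^ (-p) * (s + T) ^ (-p)
      ≤ ∫ s in (0 : ℝ)..t, ((1 + t + T) / 2) ^ (-p) * ((1 + t - s) ^ (-p) + (s + T) ^ (-p)) :=
        intervalIntegral.integral_mono_on ht (hA.mul hB).intervalIntegrable
          (continuousOn_const.mul (hA.add hB)).intervalIntegrable hpt
    _ = ((1 + t + T) / 2) ^ (-p) * ((∫ s in (0 : ℝ)..t, (1 + t - s) ^ (-p)) +
          ∫ s in (0 : ℝ)..t, (s + T) ^ (-p)) := by
        rw [intervalIntegral.integral_const_mul,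
          intervalIntegral.integral_add hA.intervalIntegrable hB.intervalIntegrable]
    _ ≤ ((1 + t + T) / 2) ^ (-p) * (2 / (p - 1)) := by
        gcongr
        exact (add_le_add hleft hright).trans_eq (by ring)

lemma rpow_mul_integral_rpow_neg_conv_le {p α t T : ℝ} (hp : 1 < p) (hpα : p ≤ α) (ht : 0 ≤ t)
    (hT : 1 ≤ T) :
    (t + T) ^ p * ∫ s in (0 : ℝ)..t, (1 + t - s) ^ (-p) * (s + T) ^ (-α) ≤
      2 ^ p * (2 / (p - 1)) * T ^ (p - α) := by
  have hA := continuousOn_one_add_sub_rpow ht (-p)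
  have hB := fun q => continuousOn_add_rpow (T := T) ht (by linarith) q
  have hpt : ∀ s ∈ Icc 0 t, (1 + t - s) ^ (-p) * (s + T) ^ (-α) ≤
      T ^ (p - α) * ((1 + t - s) ^ (-p) * (s + T) ^ (-p)) := by
    intro s hs
    rw [mul_left_comm]
    gcongr
    · exact Real.rpow_nonneg (by linarith [hs.2]) _
    · exact rpow_neg_le_rpow_mul_rpow_neg (by linarith) (by linarith [hs.1]) hpα
  have hreduce : ∫ s in (0 : ℝ)..t, (1 + t - s) ^ (-p) * (s + T) ^ (-α) ≤
      T ^ (p - α) * ∫ s in (0 : ℝ)..t, (1 + t - s) ^ (-p) * (s + T) ^ (-p) := by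
    rw [← intervalIntegral.integral_const_mul]
    exact intervalIntegral.integral_mono_on ht (hA.mul (hB (-α))).intervalIntegrable
      (continuousOn_const.mul (hA.mul (hB (-p)))).intervalIntegrable hpt
  calc (t + T) ^ p * ∫ s in (0 : ℝ)..t, (1 + t - s) ^ (-p) * (s + T) ^ (-α)
      ≤ (t + T) ^ p * (T ^ (p - α) * (((1 + t + T) / 2) ^ (-p) * (2 / (p - 1)))) := by
        gcongr
        exact hreduce.trans (by gcongr; exact integral_rpow_neg_conv_le hp ht hT)
    _ = (t + T) ^ p * ((1 + t + T) / 2) ^ (-p) * (2 / (p - 1)) * T ^ (p - α) := by ring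
    _ ≤ 2 ^ p * (2 / (p - 1)) * T ^ (p - α) := by
        gcongr
        exact rpow_mul_half_rpow_neg_le (by linarith) (by linarith) (by linarith)

/-- Lemma 5.2: key convolution-type integral estimate uniform in the large parameter `T`. -/
theorem stmt_0 (α : ℝ) (hα : 3/2 ≤ α) :
    ∃ C > (0:ℝ), ∀ T ≥ (1:ℝ), ∀ t > (0:ℝ),
      (t + T) ^ ((3:ℝ)/2) *
        ∫ s in Icc (0:ℝ) t, (1 + t - s) ^ (-(3:ℝ)/2) * (s + T) ^ (-α)
      ≤ C * T ^ ((3:ℝ)/2 - α) := by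
  refine ⟨2 ^ ((3 : ℝ) / 2) * (2 / ((3 : ℝ) / 2 - 1)), by positivity, fun T hT t ht => ?_⟩
  rw [integral_Icc_eq_integral_Ioc, ← intervalIntegral.integral_of_le ht.le, neg_div]
  exact rpow_mul_integral_rpow_neg_conv_le (by norm_num) hα ht.le hT
end

section
/- Let r > 1 and M > 0. Suppose g : ℝ → ℝ is measurable, odd (g(−y) = −g(y) for all y ∈ ℝ), and satisfies |g(y)| ≤ M⟨y⟩^{−r} for all y ∈ ℝ. Then g is integrable on ℝ, and there exists a constant C > 0, depending only on r, such that for all x ∈ ℝ, |∫_{−∞}^x g(y) dy| ≤ C M ⟨x⟩^{−(r−1)}. -/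
/-!
Since `g` is odd, its total integral vanishes, so `∫_{-∞}^x g = -∫_x^∞ g`; reflecting `y ↦ -y`
also gives `∫_{-∞}^x g = -∫_{-x}^∞ g`. Either way the antiderivative is, up to sign, a tail
integral over `(|x|, ∞)`, bounded by `M ∫_{|x|}^∞ ⟨y⟩^{-r} dy`. Comparing `⟨y⟩` with `(y + 1) / √2`
bounds that tail by `2^{r/2} / (r - 1) · ⟨x⟩^{-(r-1)}`.
-/

open MeasureTheory Set Filter Topology

theorem integral_Ioi_add_rpow_of_lt {a c m : ℝ} (ha : a < -1) (hc : -m < c) :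
    ∫ x in Ioi c, (x + m) ^ a = -(c + m) ^ (a + 1) / (a + 1) := by
  have hderiv : ∀ x ∈ Ici c,
      HasDerivAt (fun t ↦ (t + m) ^ (a + 1) / (a + 1)) ((x + m) ^ a) x := by
    intro x hx
    have hpos : 0 < x + m := by linarith [mem_Ici.mp hx]
    refine ((((hasDerivAt_id' x).add_const m).rpow_const (p := a + 1)
      (Or.inl hpos.ne')).div_const (a + 1)).congr_deriv ?_
    field_simp [show a + 1 ≠ 0 by linarith]
    ring_nf
  have hlim : Tendsto (fun t ↦ (t + m) ^ (a + 1) / (a + 1)) atTop (𝓝 (0 / (a + 1))) := by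
    rw [← neg_neg (a + 1)]
    exact ((tendsto_rpow_neg_atTop (by linarith)).comp
      (tendsto_atTop_add_const_right _ m tendsto_id)).div_const _
  rw [integral_Ioi_of_hasDerivAt_of_tendsto' hderiv (integrableOn_add_rpow_Ioi_of_lt ha hc) hlim]
  ring

theorem integrable_sqrt_one_add_sq_rpow_neg {r : ℝ} (hr : 1 < r) :
    Integrable fun y : ℝ ↦ Real.sqrt (1 + y ^ 2) ^ (-r) := by
  refine (integrable_rpow_neg_one_add_norm_sq (E := ℝ) (μ := volume) (by simpa using hr)).congr
    (Eventually.of_forall fun y ↦ ?_)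
  dsimp only
  rw [Real.norm_eq_abs, sq_abs, Real.sqrt_eq_rpow, ← Real.rpow_mul (by positivity)]
  ring_nf

theorem sqrt_one_add_sq_rpow_neg_le {r y : ℝ} (hr : 0 ≤ r) (hy : -1 < y) :
    Real.sqrt (1 + y ^ 2) ^ (-r) ≤ 2 ^ (r / 2) * (y + 1) ^ (-r) := by
  have hle : y + 1 ≤ Real.sqrt 2 * Real.sqrt (1 + y ^ 2) := by
    rw [← Real.sqrt_mul zero_le_two]
    exact Real.le_sqrt_of_sq_le (by nlinarith [sq_nonneg (y - 1)])
  have key := Real.rpow_le_rpow_of_nonpos (by linarith) hle (neg_nonpos.mpr hr)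
  rw [Real.mul_rpow (Real.sqrt_nonneg 2) (Real.sqrt_nonneg _), Real.sqrt_eq_rpow 2,
    ← Real.rpow_mul zero_le_two] at key
  calc Real.sqrt (1 + y ^ 2) ^ (-r)
      = 2 ^ (r / 2) * (2 ^ (1 / 2 * -r) * Real.sqrt (1 + y ^ 2) ^ (-r)) := by
        rw [← mul_assoc, ← Real.rpow_add two_pos]
        ring_nf
        simp
    _ ≤ 2 ^ (r / 2) * (y + 1) ^ (-r) := by gcongr

theorem setIntegral_Ioi_sqrt_one_add_sq_rpow_neg_le {r a : ℝ} (hr : 1 < r) (ha : 0 ≤ a) :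
    ∫ y in Ioi a, Real.sqrt (1 + y ^ 2) ^ (-r)
      ≤ 2 ^ (r / 2) / (r - 1) * Real.sqrt (1 + a ^ 2) ^ (-(r - 1)) := by
  have hsqrt_le : Real.sqrt (1 + a ^ 2) ≤ a + 1 :=
    (Real.sqrt_le_left (by linarith)).mpr (by nlinarith)
  calc ∫ y in Ioi a, Real.sqrt (1 + y ^ 2) ^ (-r)
      ≤ ∫ y in Ioi a, 2 ^ (r / 2) * (y + 1) ^ (-r) :=
        setIntegral_mono_on (integrable_sqrt_one_add_sq_rpow_neg hr).integrableOn
          ((integrableOn_add_rpow_Ioi_of_lt (by linarith) (by linarith)).const_mul _)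
          measurableSet_Ioi fun y hy ↦
            sqrt_one_add_sq_rpow_neg_le (by linarith) (by linarith [mem_Ioi.mp hy])
    _ = 2 ^ (r / 2) / (r - 1) * (a + 1) ^ (-(r - 1)) := by
        rw [integral_const_mul, integral_Ioi_add_rpow_of_lt (by linarith) (by linarith),
          show -r + 1 = -(r - 1) by ring]
        field_simp
    _ ≤ 2 ^ (r / 2) / (r - 1) * Real.sqrt (1 + a ^ 2) ^ (-(r - 1)) := by
        gcongr 2 ^ (r / 2) / (r - 1) * ?_
        exact Real.rpow_le_rpow_of_nonpos (by positivity) hsqrt_le (by linarith)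

section Odd

variable {E : Type*} [NormedAddCommGroup E] [NormedSpace ℝ E] {g : ℝ → E}

theorem integral_eq_zero_of_odd (hodd : ∀ y, g (-y) = -g y) : ∫ y, g y = 0 := by
  have h := integral_neg_eq_self g volume
  simp only [hodd, integral_neg] at h
  have := IsAddTorsionFree.of_isTorsionFree ℝ E
  exact neg_eq_self.mp h

theorem setIntegral_Iic_eq_neg_setIntegral_Ioi_of_odd (hg : Integrable g)
    (hodd : ∀ y, g (-y) = -g y) (x : ℝ) : ∫ y in Iic x, g y = -∫ y in Ioi x, g y := by
  rw [eq_neg_iff_add_eq_zero,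
    intervalIntegral.integral_Iic_add_Ioi hg.integrableOn hg.integrableOn,
    integral_eq_zero_of_odd hodd]

theorem setIntegral_Iic_eq_neg_setIntegral_Ioi_neg_of_odd (hodd : ∀ y, g (-y) = -g y) (x : ℝ) :
    ∫ y in Iic x, g y = -∫ y in Ioi (-x), g y := by
  rw [← integral_neg, ← neg_neg x, ← integral_comp_neg_Ioi, neg_neg]
  simp only [hodd]

theorem norm_setIntegral_Iic_eq_norm_setIntegral_Ioi_abs_of_odd (hg : Integrable g)
    (hodd : ∀ y, g (-y) = -g y) (x : ℝ) : ‖∫ y in Iic x, g y‖ = ‖∫ y in Ioi |x|, g y‖ := by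
  rcases abs_cases x with ⟨hx, -⟩ | ⟨hx, -⟩
  · rw [hx, setIntegral_Iic_eq_neg_setIntegral_Ioi_of_odd hg hodd, norm_neg]
  · rw [hx, setIntegral_Iic_eq_neg_setIntegral_Ioi_neg_of_odd hodd, norm_neg]

end Odd

/-- Lemma 3.3: antiderivatives of odd, algebraically localized functions retain
algebraic localization with one power less. Here `⟨y⟩ = (1+y²)^{1/2}`. -/
theorem stmt_3 (r : ℝ) (hr : 1 < r) :
    ∃ C > (0:ℝ), ∀ (M : ℝ) (g : ℝ → ℝ), 0 < M → Measurable g →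
      (∀ y : ℝ, g (-y) = -g y) →
      (∀ y : ℝ, |g y| ≤ M * Real.sqrt (1 + y ^ 2) ^ (-r)) →
      Integrable g ∧
        ∀ x : ℝ, |∫ y in Iic x, g y| ≤ C * M * Real.sqrt (1 + x ^ 2) ^ (-(r - 1)) := by
  refine ⟨2 ^ (r / 2) / (r - 1), div_pos (by positivity) (by linarith), ?_⟩
  intro M g hM hmeas hodd hbound
  have hdom : Integrable fun y ↦ M * Real.sqrt (1 + y ^ 2) ^ (-r) :=
    (integrable_sqrt_one_add_sq_rpow_neg hr).const_mul M
  have hg : Integrable g := hdom.mono' hmeas.aestronglyMeasurable (.of_forall hbound)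
  refine ⟨hg, fun x ↦ ?_⟩
  rw [← Real.norm_eq_abs, norm_setIntegral_Iic_eq_norm_setIntegral_Ioi_abs_of_odd hg hodd,
    ← sq_abs x]
  calc ‖∫ y in Ioi |x|, g y‖
      ≤ ∫ y in Ioi |x|, M * Real.sqrt (1 + y ^ 2) ^ (-r) :=
        norm_integral_le_of_norm_le hdom.integrableOn (.of_forall hbound)
    _ = M * ∫ y in Ioi |x|, Real.sqrt (1 + y ^ 2) ^ (-r) := integral_const_mul _ _
    _ ≤ M * (2 ^ (r / 2) / (r - 1) * Real.sqrt (1 + |x| ^ 2) ^ (-(r - 1))) := by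
        gcongr
        exact setIntegral_Ioi_sqrt_one_add_sq_rpow_neg_le hr (abs_nonneg x)
    _ = _ := by ring
end

section
/- Let m ≥ 1 be an integer and δ₀ > 0. For k = 0, …, 2m let p_k : (−δ₀, δ₀) → ℝ be infinitely differentiable, and let g : (−δ₀, δ₀) → ℝ be infinitely differentiable. Define d(ν, c, δ) = Σ_{k=0}^{2m} p_k(δ) ν^k + c ν + g(δ) for ν, c ∈ ℝ and δ ∈ (−δ₀, δ₀). Suppose there exist η₀ > 0, c₀ ∈ ℝ, and α₀ > 0 such that d(−η₀, c₀, 0) = 0, ∂_ν d(−η₀, c₀, 0) = 0, and (1/2) ∂²_ν d(−η₀, c₀, 0) = α₀. Then there exist δ₁ ∈ (0, δ₀] and infinitely differentiable functions η_*, c_* : (−δ₁, δ₁) → ℝ with η_*(0) = η₀ and c_*(0) = c₀, such that for all δ ∈ (−δ₁, δ₁): d(−η_*(δ), c_*(δ), δ) = 0, ∂_ν d(−η_*(δ), c_*(δ), δ) = 0, and (1/2) ∂²_ν d(−η_*(δ), c_*(δ), δ) > 0. -/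
open Set

/-- The dispersion relation at `λ = 0` of the linearization about the unstable state:
`d(ν, c, δ) = Σ_{k=0}^{2m} p_k(δ) ν^k + c ν + g(δ)`. -/
noncomputable def disp (m : ℕ) (p : ℕ → ℝ → ℝ) (g : ℝ → ℝ) (ν c δ : ℝ) : ℝ :=
  (∑ k ∈ Finset.range (2 * m + 1), p k δ * ν ^ k) + c * ν + g δ

/-- The partial derivative of `disp` in `ν`, minus `c`. -/
noncomputable def Efun (m : ℕ) (p : ℕ → ℝ → ℝ) (ν δ : ℝ) : ℝ :=
  ∑ k ∈ Finset.range (2 * m + 1), (k : ℝ) * p k δ * ν ^ (k - 1)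

/-- The second partial derivative of `disp` in `ν`. -/
noncomputable def Ffun (m : ℕ) (p : ℕ → ℝ → ℝ) (ν δ : ℝ) : ℝ :=
  ∑ k ∈ Finset.range (2 * m + 1), (k : ℝ) * ((k - 1 : ℕ) : ℝ) * p k δ * ν ^ (k - 1 - 1)

/-- `disp` after substituting the critical speed `c = -Efun`. -/
noncomputable def hfun (m : ℕ) (p : ℕ → ℝ → ℝ) (g : ℝ → ℝ) (ν δ : ℝ) : ℝ :=
  (∑ k ∈ Finset.range (2 * m + 1), (1 - (k : ℝ)) * p k δ * ν ^ k) + g δ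

lemma hasDerivAt_disp (m : ℕ) (p : ℕ → ℝ → ℝ) (g : ℝ → ℝ) (c δ ν : ℝ) :
    HasDerivAt (fun ν => disp m p g ν c δ) (Efun m p ν δ + c) ν := by
  have h1 : ∀ k ∈ Finset.range (2 * m + 1),
      HasDerivAt (fun ν : ℝ => p k δ * ν ^ k) ((k : ℝ) * p k δ * ν ^ (k - 1)) ν := by
    intro k _
    have h := (hasDerivAt_pow k ν).const_mul (p k δ)
    exact h.congr_deriv (by ring)
  have h2 := HasDerivAt.fun_sum h1
  have h3 : HasDerivAt (fun ν : ℝ => c * ν) c ν := by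
    simpa using (hasDerivAt_id ν).const_mul c
  have h4 := (h2.add h3).add_const (g δ)
  simpa [disp, Efun] using h4

lemma hasDerivAt_Efun (m : ℕ) (p : ℕ → ℝ → ℝ) (δ ν : ℝ) :
    HasDerivAt (fun ν => Efun m p ν δ) (Ffun m p ν δ) ν := by
  simp only [Efun, Ffun]
  refine HasDerivAt.fun_sum fun k _ => ?_
  have h := (hasDerivAt_pow (k - 1) ν).const_mul ((k : ℝ) * p k δ)
  exact h.congr_deriv (by ring)

lemma deriv_disp (m : ℕ) (p : ℕ → ℝ → ℝ) (g : ℝ → ℝ) (c δ : ℝ) :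
    (deriv fun ν => disp m p g ν c δ) = fun ν => Efun m p ν δ + c :=
  funext fun ν => (hasDerivAt_disp m p g c δ ν).deriv

lemma deriv2_disp (m : ℕ) (p : ℕ → ℝ → ℝ) (g : ℝ → ℝ) (c δ ν : ℝ) :
    deriv (deriv fun ν => disp m p g ν c δ) ν = Ffun m p ν δ := by
  rw [deriv_disp]
  exact ((hasDerivAt_Efun m p δ ν).add_const c).deriv

lemma disp_subst (m : ℕ) (p : ℕ → ℝ → ℝ) (g : ℝ → ℝ) (ν δ : ℝ) :
    disp m p g ν (-(Efun m p ν δ)) δ = hfun m p g ν δ := by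
  have key : (∑ k ∈ Finset.range (2 * m + 1), (k : ℝ) * p k δ * ν ^ (k - 1)) * ν
      = ∑ k ∈ Finset.range (2 * m + 1), (k : ℝ) * p k δ * ν ^ k := by
    rw [Finset.sum_mul]
    refine Finset.sum_congr rfl fun k _ => ?_
    cases k with
    | zero => simp
    | succ n =>
      have : n + 1 - 1 = n := rfl
      rw [this, pow_succ]
      ring
  simp only [disp, hfun, Efun, neg_mul]
  rw [key, ← sub_eq_add_neg, ← Finset.sum_sub_distrib]
  congr 1
  exact Finset.sum_congr rfl fun k _ => by ring

lemma hasDerivAt_hfun (m : ℕ) (p : ℕ → ℝ → ℝ) (g : ℝ → ℝ) (δ ν : ℝ) :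
    HasDerivAt (fun ν => hfun m p g ν δ) (-ν * Ffun m p ν δ) ν := by
  have h1 : HasDerivAt
      (fun ν : ℝ => ∑ k ∈ Finset.range (2 * m + 1), (1 - (k : ℝ)) * p k δ * ν ^ k)
      (∑ k ∈ Finset.range (2 * m + 1), (1 - (k : ℝ)) * p k δ * ((k : ℝ) * ν ^ (k - 1))) ν :=
    HasDerivAt.fun_sum fun k _ => (hasDerivAt_pow k ν).const_mul _
  have h2 : (∑ k ∈ Finset.range (2 * m + 1), (1 - (k : ℝ)) * p k δ * ((k : ℝ) * ν ^ (k - 1)))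
      = -ν * Ffun m p ν δ := by
    simp only [Ffun, Finset.mul_sum]
    refine Finset.sum_congr rfl fun k _ => ?_
    match k with
    | 0 => simp
    | 1 => norm_num
    | (n + 2) =>
      have e2 : n + 2 - 1 - 1 = n := rfl
      have e1 : n + 2 - 1 = n + 1 := rfl
      rw [e2, e1]
      push_cast
      rw [pow_succ]
      ring
  have h3 := h1.add_const (g δ)
  rw [h2] at h3
  simpa only [hfun] using h3

lemma aux_smooth (m : ℕ) (p : ℕ → ℝ → ℝ) {δ₀ : ℝ}
    (hp : ∀ k ≤ 2 * m, ContDiffOn ℝ (⊤ : ℕ∞) (p k) (Ioo (-δ₀) δ₀))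
    (a : ℕ → ℝ) (e : ℕ → ℕ) :
    ContDiffOn ℝ (⊤ : ℕ∞) (fun x : ℝ × ℝ => ∑ k ∈ Finset.range (2 * m + 1), a k * p k x.2 * x.1 ^ e k)
      ((univ : Set ℝ) ×ˢ Ioo (-δ₀) δ₀) := by
  apply ContDiffOn.sum
  intro k hk
  have hk' : k ≤ 2 * m := Nat.lt_succ_iff.mp (Finset.mem_range.mp hk)
  have h1 : ContDiffOn ℝ (⊤ : ℕ∞) (fun x : ℝ × ℝ => p k x.2) ((univ : Set ℝ) ×ˢ Ioo (-δ₀) δ₀) :=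
    (hp k hk').comp contDiff_snd.contDiffOn (fun x hx => hx.2)
  exact (contDiffOn_const.mul h1).mul ((contDiff_fst.pow _).contDiffOn)

/-- Lemma 7.1: robustness of simple pinched double roots. The critical rate `η_*` and
linear spreading speed `c_*` persist smoothly under perturbation, with positive effective
diffusivity. -/
theorem stmt_8 (m : ℕ) (hm : 1 ≤ m) (δ₀ : ℝ) (hδ₀ : 0 < δ₀)
    (p : ℕ → ℝ → ℝ) (g : ℝ → ℝ)
    (hp : ∀ k ≤ 2 * m, ContDiffOn ℝ (⊤ : ℕ∞) (p k) (Ioo (-δ₀) δ₀))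
    (hg : ContDiffOn ℝ (⊤ : ℕ∞) g (Ioo (-δ₀) δ₀))
    (η₀ c₀ α₀ : ℝ) (hη₀ : 0 < η₀) (hα₀ : 0 < α₀)
    (h1 : disp m p g (-η₀) c₀ 0 = 0)
    (h2 : deriv (fun ν => disp m p g ν c₀ 0) (-η₀) = 0)
    (h3 : (1/2) * deriv (deriv (fun ν => disp m p g ν c₀ 0)) (-η₀) = α₀) :
    ∃ δ₁ : ℝ, 0 < δ₁ ∧ δ₁ ≤ δ₀ ∧
      ∃ ηs cs : ℝ → ℝ,
        ContDiffOn ℝ (⊤ : ℕ∞) ηs (Ioo (-δ₁) δ₁) ∧ ContDiffOn ℝ (⊤ : ℕ∞) cs (Ioo (-δ₁) δ₁) ∧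
        ηs 0 = η₀ ∧ cs 0 = c₀ ∧
        ∀ δ ∈ Ioo (-δ₁) δ₁,
          disp m p g (-ηs δ) (cs δ) δ = 0 ∧
          deriv (fun ν => disp m p g ν (cs δ) δ) (-ηs δ) = 0 ∧
          0 < (1/2) * deriv (deriv (fun ν => disp m p g ν (cs δ) δ)) (-ηs δ) := by
  -- translate the hypotheses
  have h2' : Efun m p (-η₀) 0 + c₀ = 0 := by rw [deriv_disp] at h2; exact h2
  have hc₀ : c₀ = -Efun m p (-η₀) 0 := by linarith
  have hF0 : Ffun m p (-η₀) 0 = 2 * α₀ := by rw [deriv2_disp] at h3; linarith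
  have hh0 : hfun m p g (-η₀) 0 = 0 := by
    rw [← disp_subst, ← hc₀]; exact h1
  set S : Set ℝ := Ioo (-δ₀) δ₀ with hSdef
  set U : Set (ℝ × ℝ) := (univ : Set ℝ) ×ˢ S with hUdef
  have hUopen : IsOpen U := isOpen_univ.prod isOpen_Ioo
  have h0S : (0 : ℝ) ∈ S := ⟨by linarith, hδ₀⟩
  -- smoothness of the maps involved
  have hsm : ContDiffOn ℝ (⊤ : ℕ∞) (fun x : ℝ × ℝ => hfun m p g x.1 x.2) U := by
    have ha := aux_smooth m p hp (fun k => 1 - (k : ℝ)) (fun k => k)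
    exact ha.add (hg.comp contDiff_snd.contDiffOn fun x hx => hx.2)
  have hEsm : ContDiffOn ℝ (⊤ : ℕ∞) (fun x : ℝ × ℝ => Efun m p x.1 x.2) U :=
    aux_smooth m p hp (fun k => (k : ℝ)) (fun k => k - 1)
  have hFsm : ContDiffOn ℝ (⊤ : ℕ∞) (fun x : ℝ × ℝ => Ffun m p x.1 x.2) U :=
    aux_smooth m p hp (fun k => (k : ℝ) * ((k - 1 : ℕ) : ℝ)) (fun k => k - 1 - 1)
  -- the good set V
  set V : Set (ℝ × ℝ) := {x | x ∈ U ∧ 0 < Ffun m p x.1 x.2 ∧ x.1 < 0} with hVdef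
  have hVsub : V ⊆ U := fun x hx => hx.1
  have hVopen : IsOpen V := by
    rw [isOpen_iff_mem_nhds]
    rintro x ⟨hxU, hxF, hx1⟩
    have hUx : U ∈ nhds x := hUopen.mem_nhds hxU
    have hc : ContinuousAt (fun x : ℝ × ℝ => Ffun m p x.1 x.2) x :=
      (hFsm.continuousOn).continuousAt hUx
    have e1 : ∀ᶠ y in nhds x, 0 < Ffun m p y.1 y.2 := hc (Ioi_mem_nhds hxF)
    have e2 : ∀ᶠ y : ℝ × ℝ in nhds x, y.1 < 0 :=
      (continuous_fst.continuousAt (x := x)) (Iio_mem_nhds hx1)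
    filter_upwards [hUx, e1, e2] with y hy1 hy2 hy3
    exact ⟨hy1, hy2, hy3⟩
  -- at every point of V the map (ν, δ) ↦ (h(ν,δ), δ) has invertible derivative
  have key : ∀ x ∈ V, ∃ E : (ℝ × ℝ) ≃L[ℝ] (ℝ × ℝ),
      HasFDerivAt (fun y : ℝ × ℝ => (hfun m p g y.1 y.2, y.2))
        (E : (ℝ × ℝ) →L[ℝ] (ℝ × ℝ)) x := by
    rintro x ⟨hxU, hxF, hx1⟩
    have hCD : ContDiffAt ℝ (⊤ : ℕ∞) (fun y : ℝ × ℝ => hfun m p g y.1 y.2) x :=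
      hsm.contDiffAt (hUopen.mem_nhds hxU)
    have hdiff : DifferentiableAt ℝ (fun y : ℝ × ℝ => hfun m p g y.1 y.2) x :=
      hCD.differentiableAt (by simp)
    set ψ := fderiv ℝ (fun y : ℝ × ℝ => hfun m p g y.1 y.2) x with hψdef
    have hψ : HasFDerivAt (fun y : ℝ × ℝ => hfun m p g y.1 y.2) ψ x := hdiff.hasFDerivAt
    have hline : HasDerivAt (fun ν : ℝ => ((ν, x.2) : ℝ × ℝ)) ((1 : ℝ), (0 : ℝ)) x.1 :=
      (hasDerivAt_id x.1).prodMk (hasDerivAt_const x.1 x.2)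
    have hcomp : HasDerivAt (fun ν : ℝ => hfun m p g ν x.2) (ψ (1, 0)) x.1 := by
      have h := hψ.comp_hasDerivAt x.1 hline
      exact h
    have hval : ψ (1, 0) = -x.1 * Ffun m p x.1 x.2 :=
      hcomp.unique (hasDerivAt_hfun m p g x.2 x.1)
    have htne : ψ (1, 0) ≠ 0 := by
      rw [hval]
      exact ne_of_gt (mul_pos (neg_pos.mpr hx1) hxF)
    set L : (ℝ × ℝ) →L[ℝ] (ℝ × ℝ) := ψ.prod (ContinuousLinearMap.snd ℝ ℝ ℝ) with hLdef
    have hker : ∀ v : ℝ × ℝ, L v = 0 → v = 0 := by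
      rintro ⟨a, b⟩ hv
      have hb : b = 0 := by
        have h := congrArg Prod.snd hv
        simpa [hLdef] using h
      subst hb
      have ha : ψ (a, 0) = 0 := by
        have h := congrArg Prod.fst hv
        simpa [hLdef] using h
      have hsmul : ((a, (0 : ℝ)) : ℝ × ℝ) = a • ((1 : ℝ), (0 : ℝ)) := by simp
      rw [hsmul, map_smul, smul_eq_mul] at ha
      have ha0 : a = 0 := by
        rcases mul_eq_zero.mp ha with h | h
        · exact h
        · exact absurd h htne
      simp [ha0]
    have hinj : Function.Injective (L : (ℝ × ℝ) →ₗ[ℝ] (ℝ × ℝ)) := by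
      intro v w hvw
      have h := hker (v - w) (by rw [map_sub]; rw [show L v = L w from hvw]; exact sub_self _)
      exact sub_eq_zero.mp h
    have hsurj : Function.Surjective (L : (ℝ × ℝ) →ₗ[ℝ] (ℝ × ℝ)) :=
      LinearMap.injective_iff_surjective.mp hinj
    let e : (ℝ × ℝ) ≃ₗ[ℝ] (ℝ × ℝ) := LinearEquiv.ofBijective _ ⟨hinj, hsurj⟩
    let E := e.toContinuousLinearEquiv
    refine ⟨E, ?_⟩
    have hEL : (E : (ℝ × ℝ) →L[ℝ] (ℝ × ℝ)) = L := by
      apply ContinuousLinearMap.ext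
      intro v
      rfl
    rw [hEL]
    exact hψ.prodMk ((ContinuousLinearMap.snd ℝ ℝ ℝ).hasFDerivAt)
  -- the base point
  set x₀ : ℝ × ℝ := (-η₀, 0) with hx₀def
  have hx₀V : x₀ ∈ V := by
    refine ⟨⟨mem_univ _, h0S⟩, ?_, ?_⟩
    · show (0 : ℝ) < Ffun m p (-η₀) 0
      rw [hF0]; linarith
    · show -η₀ < 0
      linarith
  set Hfn : ℝ × ℝ → ℝ × ℝ := fun y => (hfun m p g y.1 y.2, y.2) with hHdef
  have hHsm : ∀ x ∈ U, ContDiffAt ℝ (⊤ : ℕ∞) Hfn x := fun x hx =>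
    (hsm.contDiffAt (hUopen.mem_nhds hx)).prodMk contDiff_snd.contDiffAt
  obtain ⟨E₀, hE₀⟩ := key x₀ hx₀V
  have hCD₀ : ContDiffAt ℝ (⊤ : ℕ∞) Hfn x₀ := hHsm x₀ (hVsub hx₀V)
  set Φ := hCD₀.toOpenPartialHomeomorph Hfn hE₀ (by simp) with hΦdef
  have hΦcoe : ⇑Φ = Hfn := hCD₀.toOpenPartialHomeomorph_coe hE₀ (by simp)
  have hx₀src : x₀ ∈ Φ.source := hCD₀.mem_toOpenPartialHomeomorph_source hE₀ (by simp)
  have hH₀ : Hfn x₀ = ((0 : ℝ), (0 : ℝ)) := by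
    simp [hHdef, hx₀def, hh0]
  have h00tgt : ((0 : ℝ), (0 : ℝ)) ∈ Φ.target := by
    have h := hCD₀.image_mem_toOpenPartialHomeomorph_target hE₀ (by simp)
    rw [← hΦdef] at h
    rwa [hH₀] at h
  have hΦsymm00 : Φ.symm ((0 : ℝ), (0 : ℝ)) = x₀ := by
    have h := Φ.left_inv hx₀src
    rw [hΦcoe, hH₀] at h
    exact h
  -- the open set W in the target
  set W := Φ.target ∩ Φ.symm ⁻¹' V with hWdef
  have hWopen : IsOpen W := Φ.symm.isOpen_inter_preimage hVopen
  have h00W : ((0 : ℝ), (0 : ℝ)) ∈ W := by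
    refine ⟨h00tgt, ?_⟩
    show Φ.symm ((0 : ℝ), (0 : ℝ)) ∈ V
    rw [hΦsymm00]
    exact hx₀V
  -- Φ.symm is smooth at every point of W
  have hsymmCD : ∀ y ∈ W, ContDiffAt ℝ (⊤ : ℕ∞) Φ.symm y := by
    rintro y ⟨hyT, hyV⟩
    have hxV : Φ.symm y ∈ V := hyV
    obtain ⟨Ey, hEy⟩ := key _ hxV
    exact Φ.contDiffAt_symm (f₀' := Ey) hyT (by rw [hΦcoe]; exact hEy)
      (by rw [hΦcoe]; exact hHsm _ (hVsub hxV))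
  -- choose δ₁
  have hjcont : Continuous (fun δ : ℝ => (((0 : ℝ), δ) : ℝ × ℝ)) :=
    continuous_const.prodMk continuous_id
  have hpre : (fun δ : ℝ => (((0 : ℝ), δ) : ℝ × ℝ)) ⁻¹' W ∈ nhds (0 : ℝ) :=
    hjcont.continuousAt.preimage_mem_nhds (hWopen.mem_nhds h00W)
  obtain ⟨ε, hε, hball⟩ := Metric.mem_nhds_iff.mp hpre
  set δ₁ := min (ε / 2) δ₀ with hδ₁def
  have hδ₁pos : 0 < δ₁ := lt_min (by linarith) hδ₀
  have hδ₁le : δ₁ ≤ δ₀ := min_le_right _ _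
  have hmemW : ∀ δ ∈ Ioo (-δ₁) δ₁, (((0 : ℝ), δ) : ℝ × ℝ) ∈ W := by
    intro δ hδ
    apply hball
    have hl := min_le_left (ε / 2) δ₀
    have h1' : -δ₁ < δ := hδ.1
    have h2' : δ < δ₁ := hδ.2
    show δ ∈ Metric.ball (0 : ℝ) ε
    rw [Metric.mem_ball, Real.dist_eq, sub_zero, abs_lt]
    constructor <;> linarith
  have hδS : ∀ δ ∈ Ioo (-δ₁) δ₁, δ ∈ S := by
    intro δ hδ
    have h1' : -δ₁ < δ := hδ.1
    have h2' : δ < δ₁ := hδ.2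
    exact ⟨by linarith, by linarith⟩
  have hmain : ∀ δ ∈ Ioo (-δ₁) δ₁,
      (Φ.symm ((0 : ℝ), δ)) ∈ V ∧ Hfn (Φ.symm ((0 : ℝ), δ)) = ((0 : ℝ), δ) := by
    intro δ hδ
    obtain ⟨hT, hV'⟩ := hmemW δ hδ
    refine ⟨hV', ?_⟩
    have h := Φ.right_inv hT
    rwa [hΦcoe] at h
  -- smoothness of δ ↦ (Φ.symm (0, δ)).1
  have hνCD : ∀ δ ∈ Ioo (-δ₁) δ₁,
      ContDiffAt ℝ (⊤ : ℕ∞) (fun δ : ℝ => (Φ.symm ((0 : ℝ), δ)).1) δ := by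
    intro δ hδ
    have hCDs : ContDiffAt ℝ (⊤ : ℕ∞) Φ.symm (((0 : ℝ), δ) : ℝ × ℝ) := hsymmCD _ (hmemW δ hδ)
    have hj : ContDiffAt ℝ (⊤ : ℕ∞) (fun δ : ℝ => (((0 : ℝ), δ) : ℝ × ℝ)) δ :=
      (contDiff_const.prodMk contDiff_id).contDiffAt
    exact contDiff_fst.contDiffAt.comp δ (hCDs.comp δ hj)
  refine ⟨δ₁, hδ₁pos, hδ₁le,
    (fun δ => -(Φ.symm ((0 : ℝ), δ)).1),
    (fun δ => -(Efun m p (Φ.symm ((0 : ℝ), δ)).1 δ)),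
    ?_, ?_, ?_, ?_, ?_⟩
  · -- ηs smooth
    intro δ hδ
    exact ((hνCD δ hδ).neg).contDiffWithinAt
  · -- cs smooth
    intro δ hδ
    have hpair : ContDiffAt ℝ (⊤ : ℕ∞)
        (fun δ : ℝ => (((Φ.symm ((0 : ℝ), δ)).1, δ) : ℝ × ℝ)) δ :=
      (hνCD δ hδ).prodMk contDiff_id.contDiffAt
    have hE2 : ContDiffAt ℝ (⊤ : ℕ∞) (fun x : ℝ × ℝ => Efun m p x.1 x.2)
        (((Φ.symm ((0 : ℝ), δ)).1, δ) : ℝ × ℝ) := by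
      refine hEsm.contDiffAt (hUopen.mem_nhds ?_)
      exact ⟨mem_univ _, hδS δ hδ⟩
    have hcomp2 := ContDiffAt.comp (g := fun x : ℝ × ℝ => Efun m p x.1 x.2)
      (f := fun δ : ℝ => (((Φ.symm ((0 : ℝ), δ)).1, δ) : ℝ × ℝ)) δ hE2 hpair
    exact (hcomp2.neg).contDiffWithinAt
  · -- ηs 0 = η₀
    show -(Φ.symm ((0 : ℝ), (0 : ℝ))).1 = η₀
    rw [hΦsymm00]
    show -(-η₀) = η₀
    ring
  · -- cs 0 = c₀
    show -(Efun m p (Φ.symm ((0 : ℝ), (0 : ℝ))).1 0) = c₀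
    rw [hΦsymm00]
    show -(Efun m p (-η₀) 0) = c₀
    rw [hc₀]
  · -- the double-root conditions
    intro δ hδ
    obtain ⟨hxV, hHx⟩ := hmain δ hδ
    obtain ⟨hxU', hxF, hx1⟩ := hxV
    have hx2 : (Φ.symm ((0 : ℝ), δ)).2 = δ := congrArg Prod.snd hHx
    have hx0 : hfun m p g (Φ.symm ((0 : ℝ), δ)).1 (Φ.symm ((0 : ℝ), δ)).2 = 0 :=
      congrArg Prod.fst hHx
    rw [hx2] at hx0 hxF
    refine ⟨?_, ?_, ?_⟩
    · show disp m p g (- -(Φ.symm ((0 : ℝ), δ)).1)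
        (-(Efun m p (Φ.symm ((0 : ℝ), δ)).1 δ)) δ = 0
      rw [neg_neg, disp_subst]
      exact hx0
    · show deriv (fun ν => disp m p g ν (-(Efun m p (Φ.symm ((0 : ℝ), δ)).1 δ)) δ)
        (- -(Φ.symm ((0 : ℝ), δ)).1) = 0
      rw [neg_neg, deriv_disp]
      simp
    · show 0 < (1/2) *
        deriv (deriv (fun ν => disp m p g ν (-(Efun m p (Φ.symm ((0 : ℝ), δ)).1 δ)) δ))
          (- -(Φ.symm ((0 : ℝ), δ)).1)
      rw [neg_neg, deriv2_disp]
      linarith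
end

section
/- Let v : [0, ∞) → ℝ be continuous on [0, ∞), twice continuously differentiable on (0, ∞), and square-integrable on (0, ∞). Then v satisfies v″(ξ) + (ξ/2) v′(ξ) + v(ξ) = 0 for all ξ > 0 together with v(0) = 0 if and only if there exists β ∈ ℝ such that v(ξ) = β ξ e^{−ξ²/4} for all ξ ≥ 0. -/
/-! The equation is exact: `t v' + (t²/2 - 1) v` has derivative `t (v'' + (t/2) v' + v)`, so it
equals a constant `C` on `(0, ∞)`. Hence `(v e^{t²/4} / t)' = C e^{t²/4} / t²`. Since
`v e^{t²/4} → v 0 = 0` as `t → 0⁺`, while `C e^{t²/4} / t² - C / t²` has the sign of `C`, comparing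
`v e^{t²/4} / t` with `-C / t` near `0` forces `C = 0`; so `v e^{t²/4} / t` is a constant `β`. -/

open Set MeasureTheory Filter Topology

lemma exists_eq_const_of_hasDerivAt_zero_Ioi {f : ℝ → ℝ} (hf : ∀ x > 0, HasDerivAt f 0 x) :
    ∃ c, ∀ x > 0, f x = c :=
  isOpen_Ioi.exists_is_const_of_deriv_eq_zero isPreconnected_Ioi
    (fun x hx => (hf x hx).differentiableAt.differentiableWithinAt) fun x hx => (hf x hx).deriv

lemma nonpos_of_tendsto_of_le_hasDerivAt_div {f d : ℝ → ℝ} {C : ℝ}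
    (hf : Tendsto f (𝓝[>] 0) (𝓝 0)) (hd : ∀ x > 0, HasDerivAt (fun t => f t / t) (d x) x)
    (hC : ∀ x > 0, C / x ^ 2 ≤ d x) : C ≤ 0 := by
  set r : ℝ → ℝ := fun t => f t / t + C * t⁻¹
  have hr : ∀ x > 0, HasDerivAt r (d x - C / x ^ 2) x := fun x hx => by
    refine ((hd x hx).add ((hasDerivAt_inv hx.ne').const_mul C)).congr_deriv ?_
    ring
  have hmono : MonotoneOn r (Ioi 0) := by
    refine monotoneOn_of_hasDerivWithinAt_nonneg (f' := fun x => d x - C / x ^ 2) (convex_Ioi 0)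
      (fun x hx => (hr x hx).continuousAt.continuousWithinAt) (fun x hx => ?_) fun x hx => ?_
    all_goals rw [interior_Ioi] at hx
    · exact (hr x hx).hasDerivWithinAt
    · exact sub_nonneg.2 (hC x hx)
  have hbound : ∀ a ∈ Ioo (0 : ℝ) 1, f a + C ≤ a * r 1 := fun a ha => by
    have h := hmono ha.1 (mem_Ioi.2 one_pos) ha.2.le
    rw [show r a = (f a + C) / a by simp only [r]; ring, div_le_iff₀ ha.1] at h
    linarith
  have hlhs : Tendsto (fun a => f a + C) (𝓝[>] 0) (𝓝 C) := by
    simpa using hf.add_const C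
  have hrhs : Tendsto (fun a : ℝ => a * r 1) (𝓝[>] 0) (𝓝 0) := by
    simpa using ((continuous_id.mul_const (r 1)).tendsto 0).mono_left nhdsWithin_le_nhds
  exact le_of_tendsto_of_tendsto hlhs hrhs (eventually_of_mem (Ioo_mem_nhdsGT one_pos) hbound)

lemma eq_zero_of_tendsto_of_hasDerivAt_div {f : ℝ → ℝ} {C : ℝ}
    (hf : Tendsto f (𝓝[>] 0) (𝓝 0))
    (hd : ∀ x > 0, HasDerivAt (fun t => f t / t) (C * Real.exp (x ^ 2 / 4) / x ^ 2) x) :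
    C = 0 := by
  have one_le_exp (x : ℝ) : 1 ≤ Real.exp (x ^ 2 / 4) := Real.one_le_exp (by positivity)
  rcases lt_trichotomy C 0 with hC | hC | hC
  · have hd' : ∀ x > 0, HasDerivAt (fun t => -f t / t) (-(C * Real.exp (x ^ 2 / 4) / x ^ 2)) x :=
      fun x hx => by simpa only [neg_div] using (hd x hx).fun_neg
    have := nonpos_of_tendsto_of_le_hasDerivAt_div (C := -C) (by simpa using hf.neg) hd'
      fun x _ => by
        rw [← neg_div, ← neg_mul]
        gcongr
        nlinarith [one_le_exp x]
    linarith
  · exact hC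
  · have := nonpos_of_tendsto_of_le_hasDerivAt_div hf hd fun x _ => by
      gcongr
      exact le_mul_of_one_le_right hC.le (one_le_exp x)
    linarith

lemma hasDerivAt_firstIntegral {v w : ℝ → ℝ} {w' x : ℝ} (hv : HasDerivAt v (w x) x)
    (hw : HasDerivAt w w' x) :
    HasDerivAt (fun t => t * w t + (t ^ 2 / 2 - 1) * v t) (x * (w' + x / 2 * w x + v x)) x := by
  have hpoly : HasDerivAt (fun t : ℝ => t ^ 2 / 2 - 1) x x := by
    simpa using ((hasDerivAt_pow 2 x).div_const 2).sub_const 1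
  refine (((hasDerivAt_id' x).mul hw).add (hpoly.mul hv)).congr_deriv ?_
  ring

lemma hasDerivAt_mul_exp_sq_div {v : ℝ → ℝ} {v' x : ℝ} (hv : HasDerivAt v v' x) (hx : x ≠ 0) :
    HasDerivAt (fun t => v t * Real.exp (t ^ 2 / 4) / t)
      ((x * v' + (x ^ 2 / 2 - 1) * v x) * Real.exp (x ^ 2 / 4) / x ^ 2) x := by
  have hexp : HasDerivAt (fun t : ℝ => Real.exp (t ^ 2 / 4)) (x / 2 * Real.exp (x ^ 2 / 4)) x := by
    convert ((hasDerivAt_pow 2 x).div_const 4).exp using 1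
    ring
  refine ((hv.mul hexp).div (hasDerivAt_id' x) hx).congr_deriv ?_
  simp only [Pi.mul_apply]
  ring

lemma hasDerivAt_exp_neg_sq_div_four (x : ℝ) :
    HasDerivAt (fun t : ℝ => Real.exp (-t ^ 2 / 4)) (-(x / 2) * Real.exp (-x ^ 2 / 4)) x := by
  refine ((hasDerivAt_pow 2 x).fun_neg.div_const 4).exp.congr_deriv ?_
  simp only [Nat.cast_ofNat]
  ring

lemma hasDerivAt_gaussianTail (β x : ℝ) :
    HasDerivAt (fun t : ℝ => β * t * Real.exp (-t ^ 2 / 4))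
      (β * (1 - x ^ 2 / 2) * Real.exp (-x ^ 2 / 4)) x := by
  refine (((hasDerivAt_id' x).const_mul β).mul (hasDerivAt_exp_neg_sq_div_four x)).congr_deriv ?_
  ring

lemma hasDerivAt_deriv_gaussianTail (β x : ℝ) :
    HasDerivAt (fun t : ℝ => β * (1 - t ^ 2 / 2) * Real.exp (-t ^ 2 / 4))
      (β * (x ^ 3 / 4 - 3 * x / 2) * Real.exp (-x ^ 2 / 4)) x := by
  have hpoly : HasDerivAt (fun t : ℝ => β * (1 - t ^ 2 / 2)) (β * -x) x := by
    simpa using (((hasDerivAt_pow 2 x).div_const 2).const_sub 1).const_mul β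
  refine (hpoly.mul (hasDerivAt_exp_neg_sq_div_four x)).congr_deriv ?_
  ring

lemma gaussianTail_ode (β x : ℝ) :
    deriv (deriv fun t : ℝ => β * t * Real.exp (-t ^ 2 / 4)) x
      + x / 2 * deriv (fun t : ℝ => β * t * Real.exp (-t ^ 2 / 4)) x
      + β * x * Real.exp (-x ^ 2 / 4) = 0 := by
  have hderiv : deriv (fun t : ℝ => β * t * Real.exp (-t ^ 2 / 4))
      = fun t => β * (1 - t ^ 2 / 2) * Real.exp (-t ^ 2 / 4) :=
    funext fun t => (hasDerivAt_gaussianTail β t).deriv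
  rw [hderiv, (hasDerivAt_deriv_gaussianTail β x).deriv]
  ring

lemma exists_eq_gaussianTail_of_ode {v : ℝ → ℝ} (hcont : ContinuousOn v (Ici 0))
    (hC2 : ContDiffOn ℝ 2 v (Ioi 0))
    (hode : ∀ ξ > 0, deriv (deriv v) ξ + ξ / 2 * deriv v ξ + v ξ = 0) (hv0 : v 0 = 0) :
    ∃ β : ℝ, ∀ ξ ≥ 0, v ξ = β * ξ * Real.exp (-ξ ^ 2 / 4) := by
  have hv : ∀ x > 0, HasDerivAt v (deriv v x) x := fun x hx =>
    ((hC2.differentiableOn two_ne_zero).differentiableAt (Ioi_mem_nhds hx)).hasDerivAt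
  have hv' : ∀ x > 0, HasDerivAt (deriv v) (deriv (deriv v) x) x := fun x hx =>
    (((hC2.deriv_of_isOpen isOpen_Ioi (by norm_num)).differentiableOn one_ne_zero).differentiableAt
      (Ioi_mem_nhds hx)).hasDerivAt
  obtain ⟨C, hC⟩ := exists_eq_const_of_hasDerivAt_zero_Ioi fun x hx => by
    simpa [hode x hx] using hasDerivAt_firstIntegral (hv x hx) (hv' x hx)
  have hq : ∀ x > 0, HasDerivAt (fun t => v t * Real.exp (t ^ 2 / 4) / t)
      (C * Real.exp (x ^ 2 / 4) / x ^ 2) x := fun x hx => by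
    simpa [hC x hx] using hasDerivAt_mul_exp_sq_div (hv x hx) hx.ne'
  have hlim : Tendsto (fun t => v t * Real.exp (t ^ 2 / 4)) (𝓝[>] 0) (𝓝 0) := by
    have hcont0 : ContinuousWithinAt (fun t => v t * Real.exp (t ^ 2 / 4)) (Ici 0) 0 :=
      (hcont 0 self_mem_Ici).mul (by fun_prop)
    simpa [hv0] using hcont0.tendsto.mono_left (nhdsWithin_mono _ Ioi_subset_Ici_self)
  obtain rfl := eq_zero_of_tendsto_of_hasDerivAt_div hlim hq
  obtain ⟨β, hβ⟩ := exists_eq_const_of_hasDerivAt_zero_Ioi fun x hx => by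
    simpa using hq x hx
  refine ⟨β, fun ξ hξ => ?_⟩
  rcases hξ.eq_or_lt with rfl | hξ
  · simp [hv0]
  · rw [← hβ ξ hξ, neg_div, Real.exp_neg]
    field_simp

theorem stmt_10_general (v : ℝ → ℝ)
    (hcont : ContinuousOn v (Ici (0:ℝ)))
    (hC2 : ContDiffOn ℝ 2 v (Ioi (0:ℝ))) :
    ((∀ ξ > (0:ℝ), deriv (deriv v) ξ + (ξ / 2) * deriv v ξ + v ξ = 0) ∧ v 0 = 0)
      ↔ ∃ β : ℝ, ∀ ξ ≥ (0:ℝ), v ξ = β * ξ * Real.exp (-ξ ^ 2 / 4) := by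
  refine ⟨fun ⟨hode, hv0⟩ => exists_eq_gaussianTail_of_ode hcont hC2 hode hv0, ?_⟩
  rintro ⟨β, hβ⟩
  refine ⟨fun ξ hξ => ?_, by simpa using hβ 0 le_rfl⟩
  have hev : v =ᶠ[𝓝 ξ] fun t => β * t * Real.exp (-t ^ 2 / 4) :=
    eventually_of_mem (Ioi_mem_nhds hξ) fun t ht => hβ t ht.le
  rw [hev.deriv.deriv_eq, hev.deriv_eq, hβ ξ hξ.le]
  exact gaussianTail_ode β ξ

/-- Characterization of `L²` solutions on the half line with Dirichlet boundary condition
of `L_Δ Ψ₀ = 0`, where `L_Δ = ∂²_ξ + (ξ/2)∂_ξ + 1`: they are exactly the multiples of the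
Gaussian tail profile `ξ e^{-ξ²/4}` (equation (2.19)). -/
theorem stmt_10 (v : ℝ → ℝ)
    (hcont : ContinuousOn v (Ici (0:ℝ)))
    (hC2 : ContDiffOn ℝ 2 v (Ioi (0:ℝ)))
    (hL2 : IntegrableOn (fun ξ => v ξ ^ 2) (Ioi (0:ℝ))) :
    ((∀ ξ > (0:ℝ), deriv (deriv v) ξ + (ξ / 2) * deriv v ξ + v ξ = 0) ∧ v 0 = 0)
      ↔ ∃ β : ℝ, ∀ ξ ≥ (0:ℝ), v ξ = β * ξ * Real.exp (-ξ ^ 2 / 4) :=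
  stmt_10_general v hcont hC2
end
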